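/- Let a, b, c be real numbers with 0 < b < c. Then the function u(z) = ∫₀¹ t^{b−1} (1 − t)^{c−b−1} (1 − z t)^{−a} dt, defined for z < 1, is strictly positive and satisfies the hypergeometric differential equation z(1 − z) u″(z) + ( c − (a + b + 1) z ) u′(z) − a b u(z) = 0 for every z < 1. -/

import Mathlib

/-!
Differentiating twice under the integral sign (legitimate because on a compact neighbourhood
of `z` in `(-∞, 1)` the factor `(1 - x t)^e` stays bounded) turns
`z(1-z) u'' + (c-(a+b+1)z) u' - ab u` into a single integral over `(0, 1)`. Its integrand is
the `t`-derivative of `-a t^b (1-t)^(c-b) (1-zt)^(-a-1)`, which vanishes at `t = 0` and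
`t = 1` because `b > 0` and `c - b > 0`.
-/

open MeasureTheory Set intervalIntegral

lemma Real.rpow_eq_rpow_sub_one_mul {x : ℝ} (hx : x ≠ 0) (y : ℝ) :
    x ^ y = x ^ (y - 1) * x := by
  rw [Real.rpow_sub_one hx, div_mul_cancel₀ _ hx]

lemma one_sub_mul_pos {x t : ℝ} (hx : x < 1) (ht : t ∈ Icc (0 : ℝ) 1) : 0 < 1 - x * t := by
  rcases le_or_gt x 0 with h | h <;> nlinarith [ht.1, ht.2]

lemma continuousOn_one_sub_mul_rpow {x : ℝ} (hx : x < 1) (e : ℝ) :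
    ContinuousOn (fun t : ℝ => (1 - x * t) ^ e) (uIcc 0 1) := by
  rw [uIcc_of_le zero_le_one]
  exact ContinuousOn.rpow_const (by fun_prop) fun t ht => Or.inl (one_sub_mul_pos hx ht).ne'

lemma intervalIntegrable_rpow_mul_one_sub_rpow_zero_half {p : ℝ} (hp : 0 < p) (q : ℝ) :
    IntervalIntegrable (fun t : ℝ => t ^ (p - 1) * (1 - t) ^ (q - 1)) volume 0 (1 / 2) := by
  refine (intervalIntegrable_rpow' (by linarith)).mul_continuousOn
    (ContinuousOn.rpow_const (by fun_prop) fun t ht => Or.inl ?_)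
  rw [uIcc_of_le (by norm_num)] at ht
  exact (show (0 : ℝ) < 1 - t by linarith [ht.2]).ne'

lemma intervalIntegrable_rpow_mul_one_sub_rpow {p q : ℝ} (hp : 0 < p) (hq : 0 < q) :
    IntervalIntegrable (fun t : ℝ => t ^ (p - 1) * (1 - t) ^ (q - 1)) volume 0 1 := by
  have hright := (intervalIntegrable_rpow_mul_one_sub_rpow_zero_half hq p).comp_sub_left 1
  norm_num at hright
  refine (intervalIntegrable_rpow_mul_one_sub_rpow_zero_half hp q).trans ?_
  simpa only [mul_comm] using hright.symm

lemma hasDerivAt_integral_mul_one_sub_mul_rpow {g : ℝ → ℝ}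
    (hg : IntervalIntegrable g volume 0 1) (e : ℝ) {z : ℝ} (hz : z < 1) :
    HasDerivAt (fun x => ∫ t in (0 : ℝ)..1, g t * (1 - x * t) ^ e)
      (∫ t in (0 : ℝ)..1, g t * (-t * e) * (1 - z * t) ^ (e - 1)) z := by
  set ε := (1 - z) / 2 with hε_def
  have hε : 0 < ε := by positivity
  have hball : ∀ x ∈ Metric.closedBall z ε, x < 1 := fun x hx => by
    have := (abs_le.1 (Real.dist_eq x z ▸ Metric.mem_closedBall.1 hx)).2
    linarith [hε_def]
  obtain ⟨K, hK⟩ : ∃ K, ∀ p ∈ Metric.closedBall z ε ×ˢ Icc (0 : ℝ) 1,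
      ‖(1 - p.1 * p.2) ^ (e - 1)‖ ≤ K :=
    ((isCompact_closedBall z ε).prod isCompact_Icc).exists_bound_of_continuousOn <|
      ContinuousOn.rpow_const (by fun_prop) fun p hp =>
        Or.inl (one_sub_mul_pos (hball p.1 hp.1) hp.2).ne'
  have hg_meas := hg.def'.aestronglyMeasurable
  refine (hasDerivAt_integral_of_dominated_loc_of_deriv_le (Metric.ball_mem_nhds z hε)
    (F := fun x t => g t * (1 - x * t) ^ e)
    (F' := fun x t => g t * (-t * e) * (1 - x * t) ^ (e - 1))
    (bound := fun t => ‖g t‖ * (|e| * K)) ?_ ?_ ?_ ?_ (hg.norm.mul_const _) ?_).2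
  · exact .of_forall fun x => hg_meas.mul (Measurable.aestronglyMeasurable (by fun_prop))
  · exact hg.mul_continuousOn (continuousOn_one_sub_mul_rpow hz e)
  · exact (hg_meas.mul (Measurable.aestronglyMeasurable (by fun_prop))).mul
      (Measurable.aestronglyMeasurable (by fun_prop))
  · refine .of_forall fun t ht x hx => ?_
    rw [uIoc_of_le zero_le_one] at ht
    have hKt := hK (x, t) ⟨Metric.ball_subset_closedBall hx, Ioc_subset_Icc_self ht⟩
    rw [norm_mul, norm_mul, mul_assoc]
    gcongr ‖g t‖ * ?_
    rw [norm_mul, norm_neg, Real.norm_of_nonneg ht.1.le, Real.norm_eq_abs]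
    calc t * |e| * ‖(1 - x * t) ^ (e - 1)‖ ≤ 1 * |e| * K := by gcongr; exact ht.2
      _ = |e| * K := by rw [one_mul]
  · refine .of_forall fun t ht x hx => ?_
    rw [uIoc_of_le zero_le_one] at ht
    have hpos := one_sub_mul_pos (hball x (Metric.ball_subset_closedBall hx))
      (Ioc_subset_Icc_self ht)
    have := (((hasDerivAt_mul_const t).const_sub 1).rpow_const (p := e)
      (Or.inl hpos.ne')).const_mul (g t)
    simpa only [mul_assoc] using this

lemma hasDerivAt_euler_primitive {a b c z t : ℝ} (hz : z < 1) (ht : t ∈ Ioo (0 : ℝ) 1) :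
    HasDerivAt (fun t : ℝ => -a * (t ^ b * (1 - t) ^ (c - b) * (1 - z * t) ^ (-a - 1)))
      (z * (1 - z) * (t ^ (b - 1) * (1 - t) ^ (c - b - 1) * (-t * -a) * (-t * (-a - 1))
          * (1 - z * t) ^ (-a - 1 - 1))
        + (c - (a + b + 1) * z) * (t ^ (b - 1) * (1 - t) ^ (c - b - 1) * (-t * -a)
          * (1 - z * t) ^ (-a - 1))
        - a * b * (t ^ (b - 1) * (1 - t) ^ (c - b - 1) * (1 - z * t) ^ (-a))) t := by
  have ht0 : t ≠ 0 := ht.1.ne'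
  have ht1 : 1 - t ≠ 0 := by linarith [ht.2]
  have hs : 1 - z * t ≠ 0 := (one_sub_mul_pos hz (Ioo_subset_Icc_self ht)).ne'
  have := (((Real.hasDerivAt_rpow_const (p := b) (Or.inl ht0)).mul
    (((hasDerivAt_id t).const_sub 1).rpow_const (p := c - b) (Or.inl ht1))).mul
    ((((hasDerivAt_id t).const_mul z).const_sub 1).rpow_const (p := -a - 1) (Or.inl hs))).const_mul
    (-a)
  refine this.congr_deriv ?_
  simp only [id, Pi.mul_apply]
  rw [Real.rpow_eq_rpow_sub_one_mul ht0 b, Real.rpow_eq_rpow_sub_one_mul ht1 (c - b),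
    Real.rpow_eq_rpow_sub_one_mul hs (-a), Real.rpow_eq_rpow_sub_one_mul hs (-a - 1)]
  ring

lemma integral_euler_pos {a b c z : ℝ} (hb : 0 < b) (hbc : b < c) (hz : z < 1) :
    0 < ∫ t in (0 : ℝ)..1, t ^ (b - 1) * (1 - t) ^ (c - b - 1) * (1 - z * t) ^ (-a) := by
  refine intervalIntegral_pos_of_pos_on ((intervalIntegrable_rpow_mul_one_sub_rpow hb
    (sub_pos.2 hbc)).mul_continuousOn (continuousOn_one_sub_mul_rpow hz (-a)))
    (fun t ht => ?_) zero_lt_one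
  have ht0 := ht.1
  have ht1 : 0 < 1 - t := sub_pos.2 ht.2
  have hs := one_sub_mul_pos hz (Ioo_subset_Icc_self ht)
  positivity

-- The factors `-t * -a` and `-t * (-a - 1)` are the chain-rule factors produced by
-- `hasDerivAt_integral_mul_one_sub_mul_rpow`, so the three integrals are `u''`, `u'` and `u`.
lemma hypergeometricOperator_euler_integrals_eq_zero {a b c z : ℝ} (hb : 0 < b) (hbc : b < c)
    (hz : z < 1) :
    z * (1 - z) * (∫ t in (0 : ℝ)..1, t ^ (b - 1) * (1 - t) ^ (c - b - 1) * (-t * -a)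
        * (-t * (-a - 1)) * (1 - z * t) ^ (-a - 1 - 1))
      + (c - (a + b + 1) * z) * (∫ t in (0 : ℝ)..1, t ^ (b - 1) * (1 - t) ^ (c - b - 1)
        * (-t * -a) * (1 - z * t) ^ (-a - 1))
      - a * b * (∫ t in (0 : ℝ)..1, t ^ (b - 1) * (1 - t) ^ (c - b - 1) * (1 - z * t) ^ (-a))
      = 0 := by
  have hw := intervalIntegrable_rpow_mul_one_sub_rpow hb (sub_pos.2 hbc)
  have hw1 := hw.mul_continuousOn (g := fun t => -t * -a) (by fun_prop)
  have h0 := (hw.mul_continuousOn (continuousOn_one_sub_mul_rpow hz (-a))).const_mul (a * b)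
  have h1 := (hw1.mul_continuousOn (continuousOn_one_sub_mul_rpow hz (-a - 1))).const_mul
    (c - (a + b + 1) * z)
  have h2 := ((hw1.mul_continuousOn (g := fun t => -t * (-a - 1)) (by fun_prop)).mul_continuousOn
    (continuousOn_one_sub_mul_rpow hz (-a - 1 - 1))).const_mul (z * (1 - z))
  have hcont : ContinuousOn
      (fun t : ℝ => -a * (t ^ b * (1 - t) ^ (c - b) * (1 - z * t) ^ (-a - 1))) (Icc 0 1) := by
    refine continuousOn_const.mul (((continuousOn_id.rpow_const fun _ _ => Or.inr hb.le).mul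
      ((continuousOn_const.sub continuousOn_id).rpow_const
        fun _ _ => Or.inr (sub_pos.2 hbc).le)).mul ?_)
    simpa only [uIcc_of_le zero_le_one] using continuousOn_one_sub_mul_rpow hz (-a - 1)
  have hFTC := integral_eq_sub_of_hasDerivAt_of_le zero_le_one hcont
    (fun t ht => hasDerivAt_euler_primitive hz ht) ((h2.add h1).sub h0)
  rw [integral_sub (h2.add h1) h0, integral_add h2 h1, intervalIntegral.integral_const_mul,
    intervalIntegral.integral_const_mul, intervalIntegral.integral_const_mul] at hFTC
  rw [hFTC]
  simp [Real.zero_rpow hb.ne', Real.zero_rpow (sub_pos.2 hbc).ne']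

/-- **Euler's integral representation solves the hypergeometric equation.**
For real `a, b, c` with `0 < b < c`, the function
`u(z) = ∫₀¹ t^(b-1) (1-t)^(c-b-1) (1-zt)^(-a) dt`, defined for `z < 1`, is strictly
positive and satisfies `z(1-z) u'' + (c - (a+b+1)z) u' - ab u = 0`. -/
theorem euler_integral_hypergeometric
    (a b c : ℝ) (hb : 0 < b) (hbc : b < c)
    (u : ℝ → ℝ)
    (hu : ∀ z, u z = ∫ t in (0:ℝ)..1,
      t ^ (b - 1) * (1 - t) ^ (c - b - 1) * (1 - z*t) ^ (-a)) :
    ∀ z < (1:ℝ), 0 < u z ∧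
      z*(1 - z) * deriv (deriv u) z + (c - (a + b + 1)*z) * deriv u z - a*b*u z = 0 := by
  obtain rfl : u = _ := funext hu
  intro z hz
  have hw := intervalIntegrable_rpow_mul_one_sub_rpow hb (sub_pos.2 hbc)
  have hu' := fun x (hx : x < 1) => hasDerivAt_integral_mul_one_sub_mul_rpow hw (-a) hx
  have hu'' := hasDerivAt_integral_mul_one_sub_mul_rpow
    (hw.mul_continuousOn (g := fun t => -t * -a) (by fun_prop)) (-a - 1) hz
  have hderiv_eq : deriv _ =ᶠ[nhds z] _ :=
    Filter.eventually_of_mem (Iio_mem_nhds hz) fun x hx => (hu' x hx).deriv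
  refine ⟨integral_euler_pos hb hbc hz, ?_⟩
  rw [hderiv_eq.deriv_eq, hu''.deriv, (hu' z hz).deriv]
  exact hypergeometricOperator_euler_integrals_eq_zero hb hbc hz
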